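/- arXiv:1301.5580 — 3 statements merged into one kernel-verified Lean document; each statement's English description precedes it below -/
import Mathlib

section
/- The principal branch of the Lambert W function, defined by the power series W(z) = -∑_{n≥1} (n^{n-1}/n!)(-z)^n, satisfies W(z)·e^{W(z)} = z for all z in the disc |z| < 1/e. -/
/-!
Expanding `e^{(m+1)t}` in `W(t e^t) = -∑ₘ (m+1)^m/(m+1)! (-t e^t)^{m+1}` gives a double series
which converges absolutely when `‖t‖ e^{‖t‖} < 1/e`, because `(m+1)^m/(m+1)! ≤ e^{m+1}`.
Summed along the diagonals, the coefficient of `t^{n+1}` is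
`(1/(n+1)!) ∑ₖ (-1)^{k-1} C(n+1,k) k^n`, an `(n+1)`-st finite difference of a polynomial of
degree `n`, so it vanishes for `n ≥ 1`; hence `W(t e^t) = t` near `0`. Thus `W(z) e^{W(z)} - z`,
holomorphic on the disc `‖z‖ < 1/e`, vanishes at the points `t e^t`, which accumulate at `0`, and
the identity theorem makes it vanish on the whole disc.
-/

/-- The principal branch of the Lambert W function, defined by its power series
`W(z) = -∑_{n ≥ 1} (n^{n-1}/n!) (-z)^n` (here indexed by `n = m+1`, `m : ℕ`). -/
noncomputable def lambertW (z : ℂ) : ℂ :=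
  -∑' m : ℕ, (((m + 1 : ℕ) : ℂ) ^ m / (Nat.factorial (m + 1) : ℂ)) * (-z) ^ (m + 1)

open Finset Nat Filter Topology Metric

theorem alternating_sum_range_choose_mul_pow_of_lt {R : Type*} [CommRing R] {j n : ℕ} (h : j < n) :
    ∑ k ∈ range (n + 1), (-1) ^ k * (n.choose k : R) * (k : R) ^ j = 0 := by
  have h0 := congrFun (fwdDiff_iter_pow_eq_zero_of_lt (R := R) h) 0
  rw [fwdDiff_iter_eq_sum_shift] at h0
  calc ∑ k ∈ range (n + 1), (-1) ^ k * (n.choose k : R) * (k : R) ^ j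
      = (-1) ^ n * ∑ k ∈ range (n + 1),
          ((-1 : ℤ) ^ (n - k) * n.choose k) • ((0 : R) + k • 1) ^ j := by
        rw [mul_sum]
        refine sum_congr rfl fun k hk => ?_
        obtain ⟨d, rfl⟩ := Nat.exists_eq_add_of_le (Nat.lt_succ_iff.mp (mem_range.mp hk))
        simp only [Nat.add_sub_cancel_left, zero_add, nsmul_eq_mul, mul_one, zsmul_eq_mul]
        push_cast
        have hd : ((-1 : R) ^ d) ^ 2 = 1 := by rw [← pow_mul, pow_mul', neg_one_sq, one_pow]
        rw [pow_add]
        linear_combination (-((-1 : R) ^ k * ((k + d).choose k : R) * (k : R) ^ j)) * hd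
    _ = 0 := by rw [h0, Pi.zero_apply, mul_zero]

theorem sum_range_neg_one_pow_mul_choose_succ_mul_pow {R : Type*} [CommRing R] (n : ℕ) :
    ∑ m ∈ range (n + 1), (-1) ^ m * ((n + 1).choose (m + 1) : R) * ((m + 1 : ℕ) : R) ^ n
      = 0 ^ n := by
  have h := alternating_sum_range_choose_mul_pow_of_lt (R := R) (Nat.lt_succ_self n)
  rw [sum_range_succ'] at h
  simp only [pow_succ, mul_neg, mul_one, neg_mul, sum_neg_distrib, Nat.choose_zero_right,
    Nat.cast_one, pow_zero] at h
  linear_combination -h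

theorem sum_antidiagonal_neg_one_pow_mul_succ_pow_div {K : Type*} [Field K] [CharZero K] (n : ℕ) :
    ∑ p ∈ antidiagonal n, (-1) ^ p.1 * ((p.1 + 1 : ℕ) : K) ^ n / ((p.1 + 1)! * p.2 ! : K)
      = 0 ^ n := by
  rw [Nat.sum_antidiagonal_eq_sum_range_succ_mk]
  calc ∑ m ∈ range (n + 1), (-1) ^ m * ((m + 1 : ℕ) : K) ^ n / ((m + 1)! * (n - m)! : K)
      = (∑ m ∈ range (n + 1), (-1) ^ m * ((n + 1).choose (m + 1) : K) * ((m + 1 : ℕ) : K) ^ n)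
          / (n + 1)! := by
        rw [sum_div]
        refine sum_congr rfl fun m hm => ?_
        have hmn : m + 1 ≤ n + 1 := by simpa using mem_range.mp hm
        rw [Nat.cast_choose K hmn, Nat.add_sub_add_right]
        have : ((n + 1)! : K) ≠ 0 := Nat.cast_ne_zero.mpr (factorial_ne_zero _)
        field_simp
    _ = 0 ^ n := by
        rw [sum_range_neg_one_pow_mul_choose_succ_mul_pow]
        rcases n with _ | n <;> simp

theorem Summable.tsum_prod_eq_tsum_sum_antidiagonal {α : Type*} [AddCommGroup α] [UniformSpace α]
    [IsUniformAddGroup α] [CompleteSpace α] [T0Space α] {f : ℕ × ℕ → α} (hf : Summable f) :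
    ∑' p, f p = ∑' n, ∑ p ∈ antidiagonal n, f p := by
  rw [← HasAntidiagonal.sigmaAntidiagonalEquivProd.tsum_eq]
  exact (HasAntidiagonal.sigmaAntidiagonalEquivProd.summable_iff.mpr hf).tsum_sigma.trans
    (tsum_congr fun n => Finset.tsum_subtype (antidiagonal n) f)

noncomputable def lambertWCoeff (m : ℕ) : ℝ := ((m + 1 : ℕ) : ℝ) ^ m / (m + 1)!

theorem lambertW_eq_tsum (z : ℂ) :
    lambertW z = -∑' m, (lambertWCoeff m : ℂ) * (-z) ^ (m + 1) := by
  simp [lambertW, lambertWCoeff]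

theorem lambertWCoeff_nonneg (m : ℕ) : 0 ≤ lambertWCoeff m := by
  unfold lambertWCoeff; positivity

theorem lambertWCoeff_le_exp_pow (m : ℕ) : lambertWCoeff m ≤ Real.exp 1 ^ (m + 1) :=
  calc lambertWCoeff m ≤ ((m + 1 : ℕ) : ℝ) ^ (m + 1) / (m + 1)! := by
        unfold lambertWCoeff
        gcongr
        · exact_mod_cast Nat.le_add_left 1 m
        · exact Nat.le_succ m
    _ ≤ Real.exp (m + 1 : ℕ) := Real.pow_div_factorial_le_exp _ (by positivity) _
    _ = Real.exp 1 ^ (m + 1) := by rw [← Real.exp_nat_mul, mul_one]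

theorem summable_lambertWCoeff_mul_pow {x : ℝ} (hx₀ : 0 ≤ x) (hx : x < 1 / Real.exp 1) :
    Summable fun m => lambertWCoeff m * x ^ (m + 1) := by
  have hq : Real.exp 1 * x < 1 := by rwa [lt_div_iff₀' (Real.exp_pos 1)] at hx
  refine Summable.of_nonneg_of_le (fun m => by have := lambertWCoeff_nonneg m; positivity)
    (fun m => ?_)
    ((summable_geometric_of_lt_one (by positivity) hq).comp_injective (add_left_injective 1))
  calc lambertWCoeff m * x ^ (m + 1) ≤ Real.exp 1 ^ (m + 1) * x ^ (m + 1) := by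
        gcongr; exact lambertWCoeff_le_exp_pow m
    _ = (Real.exp 1 * x) ^ (m + 1) := (mul_pow _ _ _).symm

theorem differentiableOn_lambertW :
    DifferentiableOn ℂ lambertW (ball 0 (1 / Real.exp 1)) := by
  intro z hz
  obtain ⟨r, hzr, hr⟩ := exists_between (mem_ball_zero_iff.mp hz)
  have hW : DifferentiableOn ℂ lambertW (ball 0 r) := by
    simp_rw [funext lambertW_eq_tsum]
    refine (Complex.differentiableOn_tsum_of_summable_norm
      (summable_lambertWCoeff_mul_pow ((norm_nonneg z).trans hzr.le) hr) (fun m => by fun_prop)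
      isOpen_ball fun m w hw => ?_).neg
    rw [norm_mul, norm_pow, norm_neg, Complex.norm_real,
      Real.norm_of_nonneg (lambertWCoeff_nonneg m)]
    have := lambertWCoeff_nonneg m
    gcongr
    exact (mem_ball_zero_iff.mp hw).le
  exact (hW.differentiableAt (isOpen_ball.mem_nhds (mem_ball_zero_iff.mpr hzr)))
    |>.differentiableWithinAt

/-- The `(m, j)` term of `W(t e^t)` once `e^{(m+1)t}` is expanded as `∑ⱼ ((m+1)t)^j / j!`. -/
noncomputable def lambertWExpTerm (t : ℂ) (p : ℕ × ℕ) : ℂ :=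
  -(lambertWCoeff p.1 * (-t) ^ (p.1 + 1)) * (((p.1 + 1 : ℕ) * t) ^ p.2 / p.2 !)

theorem hasSum_lambertWExpTerm_row (t : ℂ) (m : ℕ) :
    HasSum (fun j => lambertWExpTerm t (m, j))
      (-(lambertWCoeff m * (-(t * Complex.exp t)) ^ (m + 1))) := by
  have h := (NormedSpace.expSeries_div_hasSum_exp (((m + 1 : ℕ) : ℂ) * t)).mul_left
    (-(lambertWCoeff m * (-t) ^ (m + 1)))
  rw [← Complex.exp_eq_exp_ℂ, Complex.exp_nat_mul] at h
  rwa [show -(lambertWCoeff m * (-(t * Complex.exp t)) ^ (m + 1) : ℂ)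
    = -(lambertWCoeff m * (-t) ^ (m + 1)) * Complex.exp t ^ (m + 1) by ring]

theorem hasSum_norm_lambertWExpTerm_row (t : ℂ) (m : ℕ) :
    HasSum (fun j => ‖lambertWExpTerm t (m, j)‖)
      (lambertWCoeff m * (‖t‖ * Real.exp ‖t‖) ^ (m + 1)) := by
  have h := (NormedSpace.expSeries_div_hasSum_exp (((m + 1 : ℕ) : ℝ) * ‖t‖)).mul_left
    (lambertWCoeff m * ‖t‖ ^ (m + 1))
  rw [← Real.exp_eq_exp_ℝ, Real.exp_nat_mul, mul_assoc, ← mul_pow] at h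
  refine h.congr_fun fun j => ?_
  simp only [lambertWExpTerm, norm_mul, norm_neg, norm_pow, norm_div, Complex.norm_real,
    Complex.norm_natCast, Real.norm_of_nonneg (lambertWCoeff_nonneg _)]

theorem summable_lambertWExpTerm {t : ℂ} (ht : ‖t‖ * Real.exp ‖t‖ < 1 / Real.exp 1) :
    Summable (lambertWExpTerm t) := by
  refine Summable.of_norm ((summable_prod_of_nonneg fun _ => norm_nonneg _).mpr
    ⟨fun m => (hasSum_norm_lambertWExpTerm_row t m).summable, ?_⟩)
  simp_rw [fun m => (hasSum_norm_lambertWExpTerm_row t m).tsum_eq]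
  exact summable_lambertWCoeff_mul_pow (by positivity) ht

theorem sum_antidiagonal_lambertWExpTerm (t : ℂ) (n : ℕ) :
    ∑ p ∈ antidiagonal n, lambertWExpTerm t p = 0 ^ n * t ^ (n + 1) :=
  calc ∑ p ∈ antidiagonal n, lambertWExpTerm t p
      = ∑ p ∈ antidiagonal n,
          (-1) ^ p.1 * ((p.1 + 1 : ℕ) : ℂ) ^ n / ((p.1 + 1)! * p.2 ! : ℂ) * t ^ (n + 1) := by
        refine sum_congr rfl fun ⟨m, j⟩ hp => ?_
        obtain rfl : m + j = n := mem_antidiagonal.mp hp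
        simp only [lambertWExpTerm, lambertWCoeff, neg_pow t, Complex.ofReal_div,
          Complex.ofReal_pow, Complex.ofReal_natCast]
        ring
    _ = 0 ^ n * t ^ (n + 1) := by rw [← sum_mul, sum_antidiagonal_neg_one_pow_mul_succ_pow_div]

theorem lambertW_self_mul_exp {t : ℂ} (ht : ‖t‖ * Real.exp ‖t‖ < 1 / Real.exp 1) :
    lambertW (t * Complex.exp t) = t :=
  calc lambertW (t * Complex.exp t)
      = ∑' m, -(lambertWCoeff m * (-(t * Complex.exp t)) ^ (m + 1) : ℂ) := by
        rw [lambertW_eq_tsum, tsum_neg]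
    _ = ∑' m, ∑' j, lambertWExpTerm t (m, j) :=
        tsum_congr fun m => (hasSum_lambertWExpTerm_row t m).tsum_eq.symm
    _ = ∑' n, ∑ p ∈ antidiagonal n, lambertWExpTerm t p := by
        rw [← (summable_lambertWExpTerm ht).tsum_prod,
          (summable_lambertWExpTerm ht).tsum_prod_eq_tsum_sum_antidiagonal]
    _ = t := by
        simp_rw [sum_antidiagonal_lambertWExpTerm]
        rw [tsum_eq_single 0 fun n hn => by simp [hn]]
        simp

theorem frequently_lambertW_mul_exp_lambertW_eq :
    ∃ᶠ z in 𝓝[≠] (0 : ℂ), lambertW z * Complex.exp (lambertW z) = z := by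
  have hcont : Continuous fun t : ℂ => t * Complex.exp t := by fun_prop
  have hmaps : Tendsto (fun t : ℂ => t * Complex.exp t) (𝓝[≠] 0) (𝓝[≠] 0) :=
    tendsto_nhdsWithin_of_tendsto_nhds_of_eventually_within _
      (by simpa using (hcont.tendsto 0).mono_left nhdsWithin_le_nhds)
      (eventually_nhdsWithin_of_forall fun t ht => mul_ne_zero ht (Complex.exp_ne_zero t))
  have hsmall : ∀ᶠ t : ℂ in 𝓝 0, ‖t‖ * Real.exp ‖t‖ < 1 / Real.exp 1 :=
    ContinuousAt.eventually_lt (by fun_prop) continuousAt_const (by simp [Real.exp_pos])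
  refine hmaps.frequently (Eventually.frequently ?_)
  filter_upwards [nhdsWithin_le_nhds hsmall] with t ht
  rw [lambertW_self_mul_exp ht]

/-- `W(z) e^{W(z)} = z` for all `z` with `|z| < 1/e`. -/
theorem lambertW_mul_exp_lambertW (z : ℂ) (hz : ‖z‖ < 1 / Real.exp 1) :
    lambertW z * Complex.exp (lambertW z) = z := by
  have hF : AnalyticOnNhd ℂ (fun w => lambertW w * Complex.exp (lambertW w) - w)
      (ball 0 (1 / Real.exp 1)) :=
    ((differentiableOn_lambertW.mul differentiableOn_lambertW.cexp).sub
      differentiableOn_id).analyticOnNhd isOpen_ball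
  have hzero := hF.eqOn_zero_of_preconnected_of_frequently_eq_zero
    (convex_ball _ _).isPreconnected (mem_ball_self (by positivity))
    (frequently_lambertW_mul_exp_lambertW_eq.mono fun w hw => sub_eq_zero.mpr hw)
  exact sub_eq_zero.mp (hzero (mem_ball_zero_iff.mpr hz))
end

section
/- The formal power series y(x) defined by the functional equation x = y(x)·e^{-y(x)^r} with y(0)=0, y'(0)=1, has coefficients y(x) = ∑_{n≥0} ((rn+1)^{n-1}/n!) x^{rn+1}. -/
/-!
Taking the logarithmic derivative of `x = y e^{-y^r}` gives `x (y - r/(r+1) y^{r+1})' = y`.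
Comparing coefficients, this equation determines a solution from its linear coefficient: if two
solutions agree below degree `n ≥ 2`, their `(r+1)`-st powers agree up to degree `n`, and the
degree-`n` coefficient of the equation then reads `(n - 1) (y_n - z_n) = 0`.

The candidate solution is `x ∑ b_n(1) x^{rn}`, where `b_n(s) = s (s + n r)^{n-1} / n!` are the
Abel polynomials normalised by `n!`. They satisfy `b_{n+1}' = b_n(· + r)`, from which the
convolution identity `b_n(s + t) = ∑_{i+j=n} b_i(s) b_j(t)` follows by differentiating in `s`.
Hence the `s`-th power of the candidate is `x^s ∑ b_n(s) x^{rn}`, and the equation reduces to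
`(n+1)(1+r) b_{n+1}(1) = (1+(n+1)r) b_n(1+r)`.
-/

open Nat Finset

section AbelPolynomials

open Polynomial

theorem Polynomial.eq_of_derivative_eq_of_eval_zero_eq {K : Type*} [Field K] [CharZero K]
    {p q : K[X]} (hD : derivative p = derivative q) (h0 : p.eval 0 = q.eval 0) : p = q := by
  have h := PowerSeries.derivative.ext (f := (p : PowerSeries K)) (g := q)
    (by rw [PowerSeries.derivative_coe, PowerSeries.derivative_coe, hD])
    (by simpa [coeff_zero_eq_eval_zero] using h0)
  exact_mod_cast h

variable {K : Type*} [Field K]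

noncomputable def abelPoly (a : K) : ℕ → K[X]
  | 0 => 1
  | n + 1 => C ((n + 1)! : K)⁻¹ * X * (X + C ((n + 1) * a)) ^ n

variable (a : K)

@[simp]
theorem abelPoly_zero : abelPoly a 0 = 1 := rfl

theorem abelPoly_eval_zero (n : ℕ) : (abelPoly a n).eval 0 = if n = 0 then 1 else 0 := by
  cases n <;> simp [abelPoly]

theorem abelPoly_eval (n : ℕ) {x : K} (hx : x ≠ 0) :
    (abelPoly a n).eval x = x * (x + n * a) ^ ((n : ℤ) - 1) / n ! := by
  rcases n with _ | n
  · simp [hx]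
  · simp [abelPoly]
    ring

variable [CharZero K]

theorem derivative_abelPoly_succ (n : ℕ) :
    derivative (abelPoly a (n + 1)) = (abelPoly a n).comp (X + C a) := by
  rcases n with _ | n
  · simp [abelPoly]
  · apply Polynomial.funext
    intro x
    have h1 : (n ! : K) ≠ 0 := Nat.cast_ne_zero.mpr n.factorial_ne_zero
    have h3 : (n + 1 + 1 : K) ≠ 0 := by exact_mod_cast Nat.succ_ne_zero (n + 1)
    simp only [abelPoly, Nat.factorial_succ, derivative_mul, derivative_pow, derivative_C,
      derivative_X, derivative_add, eval_mul, eval_add, eval_pow, eval_comp, eval_C, eval_X,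
      eval_zero, eval_one, Nat.cast_mul]
    push_cast
    field_simp
    ring

theorem abelPoly_succ_eval_mul (n : ℕ) (x : K) :
    (n + 1) * (x + a) * (abelPoly a (n + 1)).eval x =
      x * (x + (n + 1) * a) * (abelPoly a n).eval (x + a) := by
  rcases n with _ | n
  · simp [abelPoly]
    ring
  · have h1 : (n ! : K) ≠ 0 := Nat.cast_ne_zero.mpr n.factorial_ne_zero
    have h3 : (n + 1 + 1 : K) ≠ 0 := by exact_mod_cast Nat.succ_ne_zero (n + 1)
    simp only [abelPoly, Nat.factorial_succ, eval_mul, eval_add, eval_pow, eval_C, eval_X]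
    push_cast
    field_simp
    ring

theorem abelPoly_comp_X_add_C (y : K) (n : ℕ) :
    (abelPoly a n).comp (X + C y) =
      ∑ p ∈ antidiagonal n, C ((abelPoly a p.2).eval y) * abelPoly a p.1 := by
  induction n with
  | zero => simp
  | succ n ih =>
    apply Polynomial.eq_of_derivative_eq_of_eval_zero_eq
    · calc derivative ((abelPoly a (n + 1)).comp (X + C y))
          = ((abelPoly a n).comp (X + C y)).comp (X + C a) := by
            simp only [derivative_comp, derivative_abelPoly_succ, comp_assoc, derivative_add,
              derivative_X, derivative_C, add_zero, one_mul, add_comp, X_comp, C_comp]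
            ring_nf
        _ = ∑ p ∈ antidiagonal n,
              C ((abelPoly a p.2).eval y) * (abelPoly a p.1).comp (X + C a) := by
            simp only [ih, Polynomial.sum_comp, mul_comp, C_comp]
        _ = derivative
              (∑ p ∈ antidiagonal (n + 1), C ((abelPoly a p.2).eval y) * abelPoly a p.1) := by
            simp [Nat.sum_antidiagonal_succ, derivative_abelPoly_succ]
    · simp [eval_finsetSum, Nat.sum_antidiagonal_succ, abelPoly_eval_zero]

theorem abelPoly_eval_add (x y : K) (n : ℕ) :
    (abelPoly a n).eval (x + y) =
      ∑ p ∈ antidiagonal n, (abelPoly a p.1).eval x * (abelPoly a p.2).eval y := by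
  simpa [eval_finsetSum, mul_comm] using congrArg (eval x) (abelPoly_comp_X_add_C a y n)

end AbelPolynomials

open PowerSeries

section AbelSeries

variable {K : Type*} [Field K] (a : K)

noncomputable def abelSeries (x : K) : K⟦X⟧ :=
  mk fun n => (abelPoly a n).eval x

theorem coeff_abelSeries (x : K) (n : ℕ) : coeff n (abelSeries a x) = (abelPoly a n).eval x :=
  coeff_mk _ _

theorem abelSeries_zero : abelSeries a 0 = 1 := by
  ext n
  simp [coeff_abelSeries, abelPoly_eval_zero, coeff_one]

variable [CharZero K]

theorem abelSeries_add (x y : K) : abelSeries a (x + y) = abelSeries a x * abelSeries a y := by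
  ext n
  simp [coeff_mul, coeff_abelSeries, abelPoly_eval_add]

theorem abelSeries_pow (x : K) (n : ℕ) : abelSeries a x ^ n = abelSeries a (n * x) := by
  induction n with
  | zero => simp [abelSeries_zero]
  | succ n ih =>
    rw [pow_succ, ih, ← abelSeries_add, Nat.cast_succ, add_mul, one_mul]

end AbelSeries

theorem coeff_X_mul_derivative {R : Type*} [CommSemiring R] (f : R⟦X⟧) (n : ℕ) :
    coeff n (X * d⁄dX R f) = n * coeff n f := by
  rcases n with _ | n
  · simp
  · rw [coeff_succ_X_mul, coeff_derivative, mul_comm]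
    push_cast
    ring

theorem pow_mul_dvd_pow_succ_sub_pow_succ {R : Type*} [CommRing R] {a b x y : R} (hx : a ∣ x)
    (hy : a ∣ y) (hxy : b ∣ x - y) (k : ℕ) : a ^ k * b ∣ x ^ (k + 1) - y ^ (k + 1) := by
  rw [← geom_sum₂_mul]
  refine mul_dvd_mul (Finset.dvd_sum fun i hi => ?_) hxy
  have hik : a ^ k = a ^ i * a ^ (k + 1 - 1 - i) := by
    rw [← pow_add]
    have := Finset.mem_range.1 hi
    congr 1
    omega
  rw [hik]
  exact mul_dvd_mul (pow_dvd_pow_of_dvd hx i) (pow_dvd_pow_of_dvd hy _)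

section Expand

variable {R : Type*} [CommRing R] (r : ℕ) (hr : r ≠ 0)

theorem coeff_X_pow_mul_expand (f : R⟦X⟧) (s n : ℕ) :
    coeff (r * n + s) (X ^ s * expand r hr f) = coeff n f := by
  rw [coeff_X_pow_mul, coeff_expand_mul]

theorem coeff_X_pow_mul_expand_of_not_exists (f : R⟦X⟧) {s k : ℕ}
    (hk : ¬ ∃ n, k = r * n + s) : coeff k (X ^ s * expand r hr f) = 0 := by
  rw [coeff_X_pow_mul', coeff_expand]
  split_ifs with hs hdvd
  · obtain ⟨n, hn⟩ := hdvd
    exact absurd ⟨n, by omega⟩ hk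
  · rfl
  · rfl

end Expand

section SpinCurve

variable {K : Type*} [Field K] (r : ℕ)

/-- What `x = y e^{-y^r}` becomes after taking logarithmic derivatives. -/
def SpinODE (y : K⟦X⟧) : Prop :=
  X * d⁄dX K (y - (r / (r + 1) : K) • y ^ (r + 1)) = y

variable (hr : r ≠ 0)

noncomputable def spinSeries : K⟦X⟧ :=
  X * expand r hr (abelSeries (r : K) 1)

variable {r}

theorem spinODE_iff_coeff {y : K⟦X⟧} :
    SpinODE r y ↔
      ∀ n : ℕ, (n : K) * (coeff n y - r / (r + 1) * coeff n (y ^ (r + 1))) = coeff n y := by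
  simp only [SpinODE, PowerSeries.ext_iff, coeff_X_mul_derivative]
  simp only [map_sub, coeff_smul, smul_eq_mul]

variable [CharZero K]

theorem spinODE_of_X_eq_mul {y E : K⟦X⟧} (hE : d⁄dX K E = -d⁄dX K (y ^ r) * E)
    (heq : X = y * E) : SpinODE r y := by
  have hpow : y * d⁄dX K (y ^ r) = (r / (r + 1) : K) • d⁄dX K (y ^ (r + 1)) := by
    rw [derivative_pow, derivative_pow]
    rcases r with _ | k
    · simp
    · have hscal : ((k + 1 : ℕ) / ((k + 1 : ℕ) + 1) : K) * (k + 1 + 1 : ℕ) = (k + 1 : ℕ) := by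
        have hk : (k + 1 + 1 : K) ≠ 0 := by exact_mod_cast Nat.succ_ne_zero (k + 1)
        push_cast
        field_simp
      have hc := congrArg (C (R := K)) hscal
      rw [map_mul, map_natCast, map_natCast] at hc
      rw [smul_eq_C_mul, Nat.add_sub_cancel, Nat.add_sub_cancel]
      linear_combination (-(y ^ (k + 1) * d⁄dX K y)) * hc
  have hone : E * (d⁄dX K y - y * d⁄dX K (y ^ r)) = 1 := by
    have h := congrArg (d⁄dX K) heq
    rw [derivative_X, Derivation.leibniz, hE] at h
    rw [h, smul_eq_mul, smul_eq_mul]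
    ring
  calc X * d⁄dX K (y - (r / (r + 1) : K) • y ^ (r + 1))
      = X * (d⁄dX K y - y * d⁄dX K (y ^ r)) := by rw [map_sub, Derivation.map_smul, hpow]
    _ = y * (E * (d⁄dX K y - y * d⁄dX K (y ^ r))) := by rw [heq]; ring
    _ = y := by rw [hone, mul_one]

theorem eq_of_spinODE (hr : 0 < r) {y z : K⟦X⟧} (hy : SpinODE r y) (hz : SpinODE r z)
    (h1 : coeff 1 y = coeff 1 z) : y = z := by
  rw [spinODE_iff_coeff] at hy hz
  have hy0 : constantCoeff y = 0 := by simpa using (hy 0).symm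
  have hz0 : constantCoeff z = 0 := by simpa using (hz 0).symm
  ext n
  induction n using Nat.strong_induction_on with
  | _ n ih =>
    match n with
    | 0 => simp [hy0, hz0]
    | 1 => exact h1
    | n + 2 =>
      have hd : X ^ (n + 2) ∣ y - z :=
        X_pow_dvd_iff.2 fun m hm => by rw [map_sub, ih m hm, sub_self]
      have hD := pow_mul_dvd_pow_succ_sub_pow_succ (X_dvd_iff.2 hy0) (X_dvd_iff.2 hz0) hd r
      rw [← pow_add] at hD
      have hDn : coeff (n + 2) (y ^ (r + 1)) = coeff (n + 2) (z ^ (r + 1)) :=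
        sub_eq_zero.1 (by rw [← map_sub]; exact X_pow_dvd_iff.1 hD _ (by omega))
      have hn : (n + 1 : K) ≠ 0 := Nat.cast_add_one_ne_zero n
      have hyn := hy (n + 2)
      have hzn := hz (n + 2)
      rw [hDn] at hyn
      apply mul_left_cancel₀ hn
      push_cast at hyn hzn
      linear_combination hyn - hzn

variable (r)

theorem spinSeries_pow (s : ℕ) :
    spinSeries r hr ^ s = X ^ s * expand r hr (abelSeries (r : K) s) := by
  rw [spinSeries, mul_pow, ← map_pow, abelSeries_pow, mul_one]

theorem coeff_spinSeries_pow (s n : ℕ) :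
    coeff (r * n + s) (spinSeries r hr ^ s) = (abelPoly (r : K) n).eval (s : K) := by
  rw [spinSeries_pow, coeff_X_pow_mul_expand, coeff_abelSeries]

theorem coeff_spinSeries_pow_of_not_exists {s k : ℕ} (hk : ¬ ∃ n, k = r * n + s) :
    coeff k (spinSeries r hr ^ s) = (0 : K) := by
  rw [spinSeries_pow, coeff_X_pow_mul_expand_of_not_exists r hr _ hk]

theorem coeff_spinSeries (n : ℕ) :
    coeff (r * n + 1) (spinSeries r hr) = (abelPoly (r : K) n).eval 1 := by
  simpa using coeff_spinSeries_pow r hr 1 n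

theorem coeff_spinSeries_of_not_exists {k : ℕ} (hk : ¬ ∃ n, k = r * n + 1) :
    coeff k (spinSeries r hr) = (0 : K) := by
  simpa using coeff_spinSeries_pow_of_not_exists r hr hk

theorem spinODE_spinSeries : SpinODE r (spinSeries (K := K) r hr) := by
  rw [spinODE_iff_coeff]
  intro k
  by_cases hk : ∃ n, k = r * n + 1
  · obtain ⟨n, rfl⟩ := hk
    rcases n with _ | n
    · have h0 : ¬ ∃ m, r * 0 + 1 = r * m + (r + 1) := by
        rintro ⟨m, hm⟩
        have := Nat.pos_of_ne_zero hr
        nlinarith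
      rw [coeff_spinSeries, coeff_spinSeries_pow_of_not_exists r hr h0]
      simp
    · have hb := abelPoly_succ_eval_mul (r : K) n 1
      rw [coeff_spinSeries, show r * (n + 1) + 1 = r * n + (r + 1) by ring, coeff_spinSeries_pow,
        Nat.cast_add_one]
      rw [add_comm (1 : K) r] at hb
      push_cast
      field_simp
      linear_combination r * hb
  · have hk' : ¬ ∃ m, k = r * m + (r + 1) := fun ⟨m, hm⟩ => hk ⟨m + 1, by rw [hm]; ring⟩
    rw [coeff_spinSeries_of_not_exists r hr hk, coeff_spinSeries_pow_of_not_exists r hr hk']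
    simp

end SpinCurve

/-- `E` stands for `e^{-y^r}`, characterized through the ODE `E' = (-y^r)'·E`. -/
theorem coefficients_r_spin_curve_general (r : ℕ) (hr : 0 < r) (y E : PowerSeries ℚ)
    (hy1 : PowerSeries.coeff 1 y = 1)
    (hE : PowerSeries.derivativeFun E = -(PowerSeries.derivativeFun (y ^ r)) * E)
    (heq : (PowerSeries.X : PowerSeries ℚ) = y * E) :
    (∀ n : ℕ, PowerSeries.coeff (r * n + 1) y =
        ((r * n + 1 : ℕ) : ℚ) ^ ((n : ℤ) - 1) / (Nat.factorial n : ℚ)) ∧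
      ∀ k : ℕ, (¬ ∃ n : ℕ, k = r * n + 1) → PowerSeries.coeff k y = 0 := by
  obtain rfl : y = spinSeries r hr.ne' :=
    eq_of_spinODE hr (spinODE_of_X_eq_mul hE heq) (spinODE_spinSeries r hr.ne')
      (by simpa [hy1] using (coeff_spinSeries (K := ℚ) r hr.ne' 0).symm)
  refine ⟨fun n => ?_, fun k => coeff_spinSeries_of_not_exists r hr.ne'⟩
  rw [coeff_spinSeries, abelPoly_eval _ _ one_ne_zero]
  push_cast
  ring_nf

/-- the unique formal power series solution `y(x)` of `x = y e^{-y^r}` with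
`y(0) = 0`, `y'(0) = 1` has coefficients `y(x) = ∑_{n ≥ 0} ((rn+1)^{n-1}/n!) x^{rn+1}`.
The series `E = e^{-y^r}` is characterized by its value `E(0) = 1` and the ODE
`E' = (-y^r)'·E`. -/
theorem coefficients_r_spin_curve (r : ℕ) (hr : 0 < r) (y E : PowerSeries ℚ)
    (hy0 : PowerSeries.constantCoeff y = 0)
    (hy1 : PowerSeries.coeff 1 y = 1)
    (hE0 : PowerSeries.constantCoeff E = 1)
    (hE : PowerSeries.derivativeFun E = -(PowerSeries.derivativeFun (y ^ r)) * E)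
    (heq : (PowerSeries.X : PowerSeries ℚ) = y * E) :
    (∀ n : ℕ, PowerSeries.coeff (r * n + 1) y =
        ((r * n + 1 : ℕ) : ℚ) ^ ((n : ℤ) - 1) / (Nat.factorial n : ℚ)) ∧
      ∀ k : ℕ, (¬ ∃ n : ℕ, k = r * n + 1) → PowerSeries.coeff k y = 0 :=
  coefficients_r_spin_curve_general r hr y E hy1 hE heq
end

section
/- Let Z(x) = ∑_{i≥0} (x^{iq}/(i! (λq)^i)) · exp(λ((iq - 1/2)^2 - 1/4)/2). Then the differential operator λ x d/dx - (x e^{λ(q-1)/2})^q ∘ e^{qλ x d/dx} annihilates Z, where e^{qλ x d/dx} acts on x^n by multiplication with e^{qλn}. -/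
/-!
Write `Z(x) = F(x^q)` with `F(y) = ∑ aᵢ yⁱ`. Expanding the Gaussian exponent gives the
recurrence `(i+1) λq a_{i+1} = e^{λq(q-1)/2} (e^{λq²})ⁱ aᵢ`, which after an index shift is
exactly the equation `λq y F'(y) = e^{λq(q-1)/2} y F(e^{λq²} y)`; with `y = x^q` this is the claim.
For `λ < 0` the Gaussian factor is at most `1`, so `|aᵢ| ≤ |λq|⁻ⁱ/i!`, `F` is entire and may be
differentiated termwise. For `λ > 0` the ratio of consecutive terms grows like `e^{λq²i}/i`, so the
series diverges at every `x ≠ 0`; there `tsum` takes its junk value `0` and both sides vanish.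
-/

open Filter Real Topology Nat

/-- The principal specialization of the `q`-double Hurwitz partition function:
`Z(x) = ∑_{i ≥ 0} (x^{iq}/(i! (λq)^i)) exp(λ((iq - 1/2)^2 - 1/4)/2)`. -/
noncomputable def Zq (q : ℕ) (l : ℝ) (x : ℝ) : ℝ :=
  ∑' i : ℕ, x ^ (i * q) / ((Nat.factorial i : ℝ) * (l * q) ^ i) *
    Real.exp (l * ((((i * q : ℕ) : ℝ) - 1 / 2) ^ 2 - 1 / 4) / 2)

theorem hasDerivAt_tsum_mul_pow_of_abs_le_pow_div_factorial {a : ℕ → ℝ} {C : ℝ}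
    (ha : ∀ n, |a n| ≤ C ^ n / n !) (y : ℝ) :
    HasDerivAt (fun z => ∑' n, a n * z ^ n) (∑' n, (n + 1) * a (n + 1) * y ^ n) y := by
  set R := |y| + 1
  have hR : 1 ≤ R := le_add_of_nonneg_left (abs_nonneg y)
  have hy : y ∈ Metric.ball (0 : ℝ) R := by simp [R]
  have hu := Real.summable_pow_div_factorial (2 * |C| * R)
  -- `n ≤ 2 ^ n` and `|z| ^ (n - 1) ≤ R ^ n` on the ball
  have hbound : ∀ n, ∀ z ∈ Metric.ball (0 : ℝ) R,
      ‖a n * (n * z ^ (n - 1))‖ ≤ (2 * |C| * R) ^ n / n ! := by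
    intro n z hz
    have hzR : |z| ≤ R := (mem_ball_zero_iff.mp hz).le
    have hn : (n : ℝ) ≤ 2 ^ n := by exact_mod_cast Nat.lt_two_pow_self.le
    calc ‖a n * (n * z ^ (n - 1))‖ = |a n| * (n * |z| ^ (n - 1)) := by simp
      _ ≤ |C| ^ n / n ! * (2 ^ n * R ^ n) := by
          gcongr
          · exact (ha n).trans (div_le_div_of_nonneg_right
              ((le_abs_self _).trans (abs_pow C n).le) (by positivity))
          · exact (pow_le_pow_left₀ (abs_nonneg z) hzR _).trans (pow_le_pow_right₀ hR (n.sub_le 1))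
      _ = (2 * |C| * R) ^ n / n ! := by rw [mul_pow, mul_pow]; ring
  have hderiv := hasDerivAt_tsum_of_isPreconnected hu Metric.isOpen_ball
    (convex_ball (0 : ℝ) R).isPreconnected (fun n z _ => (hasDerivAt_pow n z).const_mul (a n))
    hbound (Metric.mem_ball_self (by linarith)) (summable_of_ne_finset_zero (s := {0})
      (by simp +contextual)) hy
  rw [(Summable.of_norm_bounded hu fun n => hbound n y hy).tsum_eq_zero_add] at hderiv
  simpa [mul_comm, mul_left_comm] using hderiv

theorem sub_one_half_sq_sub_one_quarter_nonneg (m : ℕ) : 0 ≤ ((m : ℝ) - 1 / 2) ^ 2 - 1 / 4 := by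
  rcases m with _ | m
  · norm_num
  · push_cast
    nlinarith [m.cast_nonneg (α := ℝ)]

namespace Zq

variable {q : ℕ} {l : ℝ}

noncomputable def coeff (q : ℕ) (l : ℝ) (i : ℕ) : ℝ :=
  exp (l * ((((i * q : ℕ) : ℝ) - 1 / 2) ^ 2 - 1 / 4) / 2) / (i ! * (l * q) ^ i)

noncomputable def series (q : ℕ) (l y : ℝ) : ℝ := ∑' i, coeff q l i * y ^ i

theorem eq_series (q : ℕ) (l x : ℝ) : Zq q l x = series q l (x ^ q) :=
  tsum_congr fun i => by rw [coeff, ← pow_mul, mul_comm q i]; ring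

theorem coeff_ne_zero (hq : q ≠ 0) (hl : l ≠ 0) (i : ℕ) : coeff q l i ≠ 0 := by
  unfold coeff
  have : (q : ℝ) ≠ 0 := by exact_mod_cast hq
  positivity

theorem coeff_succ (hq : q ≠ 0) (hl : l ≠ 0) (i : ℕ) :
    (i + 1) * (l * q) * coeff q l (i + 1) =
      exp (l * (q - 1) / 2) ^ q * (exp (q * l) ^ q) ^ i * coeff q l i := by
  have hlq : l * q ≠ 0 := mul_ne_zero hl (by exact_mod_cast hq)
  have hexp : exp (l * (((((i + 1) * q : ℕ) : ℝ) - 1 / 2) ^ 2 - 1 / 4) / 2) =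
      exp (l * (q - 1) / 2) ^ q * (exp (q * l) ^ q) ^ i *
        exp (l * ((((i * q : ℕ) : ℝ) - 1 / 2) ^ 2 - 1 / 4) / 2) := by
    rw [← exp_nat_mul, ← pow_mul, ← exp_nat_mul, ← exp_add, ← exp_add]
    congr 1
    push_cast
    ring
  rw [coeff, coeff, hexp, factorial_succ]
  push_cast
  field_simp
  ring

theorem abs_coeff_le (hl : l < 0) (i : ℕ) : |coeff q l i| ≤ |l * q|⁻¹ ^ i / i ! := by
  have hexp : exp (l * ((((i * q : ℕ) : ℝ) - 1 / 2) ^ 2 - 1 / 4) / 2) ≤ 1 :=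
    exp_le_one_iff.2 (div_nonpos_of_nonpos_of_nonneg
      (mul_nonpos_of_nonpos_of_nonneg hl.le (sub_one_half_sq_sub_one_quarter_nonneg _)) zero_le_two)
  calc |coeff q l i|
      = exp (l * ((((i * q : ℕ) : ℝ) - 1 / 2) ^ 2 - 1 / 4) / 2) / (i ! * |l * q| ^ i) := by
        rw [coeff, abs_div, abs_of_pos (exp_pos _), abs_mul, abs_pow, Nat.abs_cast]
    _ ≤ 1 / (i ! * |l * q| ^ i) := by gcongr
    _ = |l * q|⁻¹ ^ i / i ! := by rw [inv_pow, div_mul_eq_div_div_swap, one_div]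

theorem hasDerivAt_series (hl : l < 0) (y : ℝ) :
    HasDerivAt (series q l) (∑' i, (i + 1) * coeff q l (i + 1) * y ^ i) y :=
  hasDerivAt_tsum_mul_pow_of_abs_le_pow_div_factorial (abs_coeff_le hl) y

theorem series_quantum_curve (hq : q ≠ 0) (hl : l ≠ 0) (y : ℝ) :
    l * q * y * ∑' i, (i + 1) * coeff q l (i + 1) * y ^ i =
      exp (l * (q - 1) / 2) ^ q * y * series q l (exp (q * l) ^ q * y) := by
  rw [series, ← tsum_mul_left, ← tsum_mul_left]
  refine tsum_congr fun i => ?_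
  rw [mul_pow]
  linear_combination (y * y ^ i) * coeff_succ hq hl i

theorem not_summable_coeff_mul_pow (hq : q ≠ 0) (hl : 0 < l) {y : ℝ} (hy : y ≠ 0) :
    ¬ Summable fun i => coeff q l i * y ^ i := by
  set E := exp (l * (q - 1) / 2) ^ q
  set w := exp (q * l) ^ q
  have hlq : 0 < l * q := mul_pos hl (by exact_mod_cast hq.bot_lt)
  have hw : 1 < w := one_lt_pow₀ (one_lt_exp_iff.2 (by positivity)) hq
  have hc : 0 < |y| * E / (2 * (l * q)) := by positivity
  have hlim : Tendsto (fun i : ℕ => ((i : ℝ) + 1) / w ^ i) atTop (𝓝 0) := by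
    have := (tendsto_pow_const_div_const_pow_of_one_lt 1 hw).add
      (tendsto_pow_atTop_nhds_zero_of_lt_one (inv_nonneg.2 (by positivity))
        (inv_lt_one_of_one_lt₀ hw))
    simpa [add_div, inv_pow] using this
  refine not_summable_of_ratio_norm_eventually_ge one_lt_two
    (Eventually.of_forall fun i => by simp [coeff_ne_zero hq hl.ne', hy]).frequently ?_
  filter_upwards [hlim.eventually (gt_mem_nhds hc)] with i hi
  have hpos : (0 : ℝ) < (i + 1) * (l * q) := by positivity
  have hstep : |coeff q l (i + 1) * y ^ (i + 1)| * ((i + 1) * (l * q)) =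
      |y| * E * w ^ i * |coeff q l i * y ^ i| := by
    rw [← abs_of_pos hpos, ← abs_of_pos (by positivity : 0 < E),
      ← abs_of_pos (by positivity : 0 < w ^ i), ← abs_mul, ← abs_mul, ← abs_mul, ← abs_mul]
    congr 1
    rw [pow_succ]
    linear_combination (y ^ i * y) * coeff_succ hq hl.ne' i
  rw [div_lt_div_iff₀ (by positivity) (by positivity)] at hi
  refine le_of_mul_le_mul_right ?_ hpos
  rw [Real.norm_eq_abs, Real.norm_eq_abs, hstep]
  nlinarith [mul_le_mul_of_nonneg_right hi.le (abs_nonneg (coeff q l i * y ^ i))]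

theorem eq_zero_of_pos (hq : q ≠ 0) (hl : 0 < l) {x : ℝ} (hx : x ≠ 0) : Zq q l x = 0 := by
  rw [eq_series]
  exact tsum_eq_zero_of_not_summable (not_summable_coeff_mul_pow hq hl (pow_ne_zero q hx))

end Zq

/-- the operator `λ x d/dx - (x e^{λ(q-1)/2})^q ∘ e^{qλ x d/dx}` annihilates `Z`,
where `e^{qλ x d/dx}` acts on functions by `f(x) ↦ f(e^{qλ} x)`. -/
theorem q_double_quantum_curve_annihilates (q : ℕ) (hq : 0 < q) (l : ℝ) (hl : l ≠ 0) (x : ℝ) :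
    l * x * deriv (Zq q l) x -
      (x * Real.exp (l * ((q : ℝ) - 1) / 2)) ^ q * Zq q l (Real.exp ((q : ℝ) * l) * x) = 0 := by
  rcases hl.lt_or_gt with hneg | hpos
  · have hZ : HasDerivAt (Zq q l)
        ((∑' i, (i + 1) * Zq.coeff q l (i + 1) * (x ^ q) ^ i) * (q * x ^ (q - 1))) x := by
      rw [funext (Zq.eq_series q l)]
      exact (Zq.hasDerivAt_series hneg _).comp x (hasDerivAt_pow q x)
    rw [hZ.deriv, Zq.eq_series, sub_eq_zero]
    calc _ = l * q * x ^ q * ∑' i, (i + 1) * Zq.coeff q l (i + 1) * (x ^ q) ^ i := by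
          rw [← pow_sub_one_mul hq.ne']; ring
      _ = exp (l * (q - 1) / 2) ^ q * x ^ q * Zq.series q l (exp (q * l) ^ q * x ^ q) :=
          Zq.series_quantum_curve hq.ne' hl _
      _ = _ := by rw [mul_pow, mul_pow, mul_comm (x ^ q)]
  · rcases eq_or_ne x 0 with rfl | hx
    · simp [zero_pow hq.ne']
    have hZ : Zq q l =ᶠ[𝓝 x] fun _ => 0 := by
      filter_upwards [isOpen_compl_singleton.mem_nhds hx] with y hy
      exact Zq.eq_zero_of_pos hq.ne' hpos hy
    rw [hZ.deriv_eq, deriv_const, Zq.eq_zero_of_pos hq.ne' hpos (mul_ne_zero (exp_ne_zero _) hx)]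
    ring
end
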